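/- arXiv:1907.10266 — 2 statements merged into one kernel-verified Lean document; each statement's English description precedes it below -/
import Mathlib

section
/- Let a₁, b₁, a₂, b₂ > 0 satisfy (a₁⁴ − b₁⁴)/b₁² = (a₂⁴ − b₂⁴)/b₂² with a₁ > b₁ and a₂ > b₂. Define f(z) = a₁·z/√(b₁²z² + a₁⁴ − b₁⁴) (principal branch). Then for z with |z² − b₂²| = a₂² (the inner boundary of the Cassini frame), |f(z)| = a₁b₂/(a₂b₁). -/
open Complex

/-- Boundary correspondence on the inner boundary of the Cassini frame: if
`(a₁⁴ − b₁⁴)/b₁² = (a₂⁴ − b₂⁴)/b₂²` with `a₁ > b₁ > 0`, `a₂ > b₂ > 0`, and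
`|z² − b₂²| = a₂²`, then `f(z) = a₁ z/√(b₁²z² + a₁⁴ − b₁⁴)` (principal branch)
satisfies `|f(z)| = a₁b₂/(a₂b₁)`. -/
theorem stmt_11 (a₁ b₁ a₂ b₂ : ℝ)
    (hb₁ : 0 < b₁) (hb₂ : 0 < b₂) (h₁ : b₁ < a₁) (h₂ : b₂ < a₂)
    (hcompat : (a₁ ^ 4 - b₁ ^ 4) / b₁ ^ 2 = (a₂ ^ 4 - b₂ ^ 4) / b₂ ^ 2)
    (z : ℂ) (hz : ‖z ^ 2 - (b₂ : ℂ) ^ 2‖ = a₂ ^ 2) :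
    ‖(a₁ : ℂ) * z /
        (((b₁ : ℂ) ^ 2 * z ^ 2 + (a₁ : ℂ) ^ 4 - (b₁ : ℂ) ^ 4) ^ ((1 : ℂ) / 2))‖ =
      a₁ * b₂ / (a₂ * b₁) := by
  set c : ℝ := (a₁ ^ 4 - b₁ ^ 4) / b₁ ^ 2 with hc
  have hb₁' : (b₁ : ℝ) ^ 2 ≠ 0 := by positivity
  have hb₂' : (b₂ : ℝ) ^ 2 ≠ 0 := by positivity
  have hc1 : a₁ ^ 4 - b₁ ^ 4 = b₁ ^ 2 * c := by rw [hc]; field_simp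
  have hc2 : a₂ ^ 4 - b₂ ^ 4 = b₂ ^ 2 * c := by
    rw [hcompat]; field_simp
  -- z ≠ 0
  have hzne : z ≠ 0 := by
    intro h
    rw [h] at hz
    simp at hz
    nlinarith [hz, sq_nonneg (a₂ + b₂)]
  have habsz : 0 < ‖z‖ := norm_pos_iff.mpr hzne
  -- constraint in normSq form
  have hns : Complex.normSq (z ^ 2 - (b₂ : ℂ) ^ 2) = a₂ ^ 4 := by
    rw [← Complex.sq_norm, hz]; ring
  -- key: normSq (z^2 + c) = (a₂^2/b₂^2)^2 * normSq (z^2)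
  have hkey : Complex.normSq (z ^ 2 + (c : ℂ)) =
      (a₂ ^ 2 / b₂ ^ 2) ^ 2 * Complex.normSq (z ^ 2) := by
    set x := (z ^ 2).re with hx
    set y := (z ^ 2).im with hy
    have h1 : (x - b₂ ^ 2) ^ 2 + y ^ 2 = a₂ ^ 4 := by
      have := hns
      simp [Complex.normSq_apply, Complex.sub_re, Complex.sub_im, ← Complex.ofReal_pow,
        Complex.ofReal_re, Complex.ofReal_im, ← hx, ← hy] at this
      nlinarith [this]
    have h2 : Complex.normSq (z ^ 2 + (c : ℂ)) = (x + c) ^ 2 + y ^ 2 := by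
      simp [Complex.normSq_apply, Complex.add_re, Complex.add_im, ← hx, ← hy]
      ring
    have h3 : Complex.normSq (z ^ 2) = x ^ 2 + y ^ 2 := by
      simp [Complex.normSq_apply, ← hx, ← hy]; ring
    rw [h2, h3]
    have hcc : b₂ ^ 2 * c = a₂ ^ 4 - b₂ ^ 4 := hc2.symm
    field_simp
    linear_combination (2 * b₂ ^ 2 * x + b₂ ^ 2 * c + a₂ ^ 4 - b₂ ^ 4) * hcc - (a₂ ^ 4 - b₂ ^ 4) * h1
  have habsw : ‖z ^ 2‖ = ‖z‖ ^ 2 := by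
    simp [map_pow]
  have hfac : 0 ≤ a₂ ^ 2 / b₂ ^ 2 := by positivity
  have habs2 : ‖z ^ 2 + (c : ℂ)‖ = (a₂ ^ 2 / b₂ ^ 2) * ‖z‖ ^ 2 := by
    have := congrArg Real.sqrt hkey
    rw [Complex.norm_def, this, Real.sqrt_mul (by positivity), Real.sqrt_sq hfac,
      ← Complex.norm_def, habsw]
  -- rewrite u
  set u : ℂ := (b₁ : ℂ) ^ 2 * z ^ 2 + (a₁ : ℂ) ^ 4 - (b₁ : ℂ) ^ 4 with hu
  have hufac : u = (b₁ : ℂ) ^ 2 * (z ^ 2 + (c : ℂ)) := by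
    rw [hu]
    have h4 : ((a₁ ^ 4 - b₁ ^ 4 : ℝ) : ℂ) = ((b₁ ^ 2 * c : ℝ) : ℂ) :=
      congrArg (fun t : ℝ => (t : ℂ)) hc1
    push_cast at h4
    rw [mul_add, ← h4]; ring
  have habsu : ‖u‖ = (b₁ * a₂ * ‖z‖ / b₂) ^ 2 := by
    rw [hufac, norm_mul, habs2, norm_pow, Complex.norm_real, Real.norm_eq_abs, abs_of_pos hb₁]
    field_simp
  have hune : u ≠ 0 := by
    intro h
    rw [h] at habsu
    simp at habsu
    have : (0:ℝ) < (b₁ * a₂ * ‖z‖ / b₂) ^ 2 :=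
      pow_pos (div_pos (mul_pos (mul_pos hb₁ (hb₂.trans h₂)) habsz) hb₂) 2
    rw [← habsu] at this
    exact lt_irrefl 0 this
  -- abs of cpow
  have hcpow : ‖u ^ ((1 : ℂ) / 2)‖ = b₁ * a₂ * ‖z‖ / b₂ := by
    rw [Complex.norm_cpow_of_ne_zero hune]
    simp only [Complex.div_re, Complex.div_im, Complex.one_re, Complex.one_im]
    norm_num
    rw [habsu, ← Real.sqrt_eq_rpow, Real.sqrt_sq
      (div_nonneg (mul_nonneg (mul_nonneg hb₁.le (hb₂.trans h₂).le) (norm_nonneg z)) hb₂.le)]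
  rw [norm_div, norm_mul, hcpow, Complex.norm_real, Real.norm_eq_abs, abs_of_pos (lt_trans hb₁ h₁)]
  rw [div_eq_div_iff (div_pos (mul_pos (mul_pos hb₁ (hb₂.trans h₂)) habsz) hb₂).ne'
    (mul_pos (hb₂.trans h₂) hb₁).ne']
  field_simp
end

section
/- Let Ψ be holomorphic on a neighborhood of the unit circle, let ω = e^{2πi/N}, z_k = Ψ(ω^k) for k ∈ ℤ, and for R > 1 set ζ_k^C(R) = Ψ(Rω^k) and ζ_k^A(r) = z_k − (i r / 2)(z_{k+1} − z_{k−1}). Then ζ_k^C(R) = ζ_k^A((R−1)/sin(2π/N)) + O((R−1)²) + O((R−1)/N) as R ↓ 1 and N → ∞, uniformly in k; equivalently, there exist constants C₁, C₂ (depending only on Ψ and bounds for R, N) such that |ζ_k^C(R) − ζ_k^A((R−1)/sin(2π/N))| ≤ C₁(R−1)² + C₂(R−1)/N. -/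
open Complex Real

private lemma mvt_first {f f' : ℂ → ℂ} {s : Set ℂ} {M : ℝ} (hs : Convex ℝ s)
    (hd : ∀ x ∈ s, HasDerivAt f (f' x) x) (hbd : ∀ x ∈ s, ‖f' x‖ ≤ M)
    {a b : ℂ} (ha : a ∈ s) (hb : b ∈ s) : ‖f b - f a‖ ≤ M * ‖b - a‖ := by
  refine hs.norm_image_sub_le_of_norm_hasFDerivWithin_le
    (f' := fun x => ContinuousLinearMap.smulRight (1 : ℂ →L[ℂ] ℂ) (f' x))
    (fun x hx => ((hd x hx).hasFDerivAt).hasFDerivWithinAt)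
    (fun x hx => ?_) ha hb
  rw [ContinuousLinearMap.norm_smulRight_apply, norm_one, one_mul]
  exact hbd x hx

private lemma smulRight_one_sub (c d : ℂ) :
    ContinuousLinearMap.smulRight (1 : ℂ →L[ℂ] ℂ) c -
      ContinuousLinearMap.smulRight (1 : ℂ →L[ℂ] ℂ) d =
      ContinuousLinearMap.smulRight (1 : ℂ →L[ℂ] ℂ) (c - d) := by
  ext v
  simp [smul_sub]

private lemma mvt_second {f f' : ℂ → ℂ} {s : Set ℂ} {C : ℝ} (hs : Convex ℝ s)
    (hd : ∀ x ∈ s, HasDerivAt f (f' x) x)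
    {a b : ℂ} (ha : a ∈ s) (hb : b ∈ s)
    (hbd : ∀ x ∈ s, ‖f' x - f' a‖ ≤ C) :
    ‖f b - f a - f' a * (b - a)‖ ≤ C * ‖b - a‖ := by
  have h := hs.norm_image_sub_le_of_norm_hasFDerivWithin_le' (C := C)
    (f' := fun x => ContinuousLinearMap.smulRight (1 : ℂ →L[ℂ] ℂ) (f' x))
    (φ := ContinuousLinearMap.smulRight (1 : ℂ →L[ℂ] ℂ) (f' a))
    (fun x hx => ((hd x hx).hasFDerivAt).hasFDerivWithinAt)
    (fun x hx => ?_) ha hb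
  · have happ : (ContinuousLinearMap.smulRight (1 : ℂ →L[ℂ] ℂ) (f' a)) (b - a)
        = f' a * (b - a) := by
      simp [mul_comm]
    rwa [happ] at h
  · rw [smulRight_one_sub, ContinuousLinearMap.norm_smulRight_apply, norm_one, one_mul]
    exact hbd x hx

private lemma norm_sub_le_of_mem_segment' {a b x : ℂ} (hx : x ∈ segment ℝ a b) :
    ‖x - a‖ ≤ ‖b - a‖ := by
  obtain ⟨u, v, hu, hv, huv, rfl⟩ := hx
  have h : u • a + v • b - a = v • (b - a) := by
    have hu' : u = 1 - v := by linarith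
    subst hu'
    simp only [Complex.real_smul]
    push_cast
    ring
  rw [h, norm_smul, Real.norm_eq_abs, _root_.abs_of_nonneg hv]
  nlinarith [norm_nonneg (b - a)]

private lemma taylor_two {f f' f'' : ℂ → ℂ} {M : ℝ} {a b : ℂ}
    (hd : ∀ x ∈ segment ℝ a b, HasDerivAt f (f' x) x)
    (hd' : ∀ x ∈ segment ℝ a b, HasDerivAt f' (f'' x) x)
    (hbd : ∀ x ∈ segment ℝ a b, ‖f'' x‖ ≤ M) :
    ‖f b - f a - f' a * (b - a)‖ ≤ M * ‖b - a‖ ^ 2 := by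
  have hM : 0 ≤ M := le_trans (norm_nonneg _) (hbd a (left_mem_segment ℝ a b))
  have key : ∀ x ∈ segment ℝ a b, ‖f' x - f' a‖ ≤ M * ‖b - a‖ := by
    intro x hx
    have h1 : ‖f' x - f' a‖ ≤ M * ‖x - a‖ :=
      mvt_first (convex_segment a b) hd' hbd (left_mem_segment ℝ a b) hx
    exact h1.trans (mul_le_mul_of_nonneg_left (norm_sub_le_of_mem_segment' hx) hM)
  have h := mvt_second (convex_segment a b) hd (left_mem_segment ℝ a b)
    (right_mem_segment ℝ a b) key
  calc ‖f b - f a - f' a * (b - a)‖ ≤ M * ‖b - a‖ * ‖b - a‖ := h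
    _ = M * ‖b - a‖ ^ 2 := by ring

set_option maxHeartbeats 4000000 in
/-- Amano's arrangement of singular points is a linear approximation of the arrangement
by a peripheral conformal mapping: with `ω = e^{2πi/N}`, `z_k = Ψ(ω^k)`,
`ζ_k^C(R) = Ψ(Rω^k)` and `ζ_k^A(r) = z_k − (ir/2)(z_{k+1} − z_{k−1})`, one has
`ζ_k^C(R) = ζ_k^A((R−1)/sin(2π/N)) + O((R−1)²) + O((R−1)/N)` as `R ↓ 1`, `N → ∞`,
uniformly in `k`. -/
theorem stmt_12 (r₁ r₂ R₀ : ℝ) (hr₁ : r₁ < 1) (hR₀ : 1 < R₀) (hr₂ : R₀ < r₂)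
    (Ψ : ℂ → ℂ) (hΨ : DifferentiableOn ℂ Ψ {z : ℂ | r₁ < ‖z‖ ∧ ‖z‖ < r₂}) :
    ∃ C₁ C₂ : ℝ, ∀ N : ℕ, 3 ≤ N → ∀ R : ℝ, 1 < R → R ≤ R₀ → ∀ k : ℤ,
      (let ω : ℂ := Complex.exp (2 * Real.pi * Complex.I / N)
       let zc : ℤ → ℂ := fun j => Ψ (ω ^ j)
       let ζC : ℂ := Ψ ((R : ℂ) * ω ^ k)
       let r : ℝ := (R - 1) / Real.sin (2 * Real.pi / N)
       let ζA : ℂ := zc k - Complex.I * (r : ℂ) / 2 * (zc (k + 1) - zc (k - 1))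
       ‖ζC - ζA‖ ≤ C₁ * (R - 1) ^ 2 + C₂ * (R - 1) / N) := by
  set U : Set ℂ := {z : ℂ | r₁ < ‖z‖ ∧ ‖z‖ < r₂} with hUdef
  have hUopen : IsOpen U := by
    have : U = (fun z : ℂ => ‖z‖) ⁻¹' Set.Ioi r₁ ∩ (fun z : ℂ => ‖z‖) ⁻¹' Set.Iio r₂ := by
      ext z; simp [hUdef, Set.mem_setOf_eq]
    rw [this]
    exact (isOpen_Ioi.preimage continuous_norm).inter
      (isOpen_Iio.preimage continuous_norm)
  set ρ₁ : ℝ := (1 + max r₁ 0) / 2 with hρ₁def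
  set ρ₂ : ℝ := (R₀ + r₂) / 2 with hρ₂def
  have hmax1 : max r₁ 0 < 1 := max_lt hr₁ one_pos
  have hmax0 : 0 ≤ max r₁ 0 := le_max_right r₁ 0
  have hρ₁pos : 0 < ρ₁ := by rw [hρ₁def]; linarith
  have hρ₁lt1 : ρ₁ < 1 := by rw [hρ₁def]; linarith
  have hr₁ρ : r₁ < ρ₁ := by
    have : r₁ ≤ max r₁ 0 := le_max_left r₁ 0
    rw [hρ₁def]; linarith
  have hρ₂gtR₀ : R₀ < ρ₂ := by rw [hρ₂def]; linarith
  have hρ₂lt : ρ₂ < r₂ := by rw [hρ₂def]; linarith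
  have h1ρ₂ : 1 ≤ ρ₂ := by linarith
  set K : Set ℂ := {z : ℂ | ρ₁ ≤ ‖z‖ ∧ ‖z‖ ≤ ρ₂} with hKdef
  have hKU : K ⊆ U := fun z hz => ⟨lt_of_lt_of_le hr₁ρ hz.1, lt_of_le_of_lt hz.2 hρ₂lt⟩
  have hKc : IsCompact K := by
    have hcl : IsClosed K := by
      have : K = (fun z : ℂ => ‖z‖) ⁻¹' Set.Icc ρ₁ ρ₂ := by ext z; simp [hKdef, Set.mem_Icc]
      rw [this]
      exact isClosed_Icc.preimage continuous_norm
    have hbd : Bornology.IsBounded K := by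
      have : K ⊆ Metric.closedBall 0 ρ₂ := fun z hz => by
        simpa [Metric.mem_closedBall, Complex.dist_eq] using hz.2
      exact (Metric.isBounded_closedBall).subset this
    exact Metric.isCompact_of_isClosed_isBounded hcl hbd
  have hA : AnalyticOnNhd ℂ Ψ U := hΨ.analyticOnNhd hUopen
  set g : ℂ → ℂ := deriv Ψ with hgdef
  set g2 : ℂ → ℂ := deriv g with hg2def
  have hAg : AnalyticOnNhd ℂ g U := hA.deriv
  have hAg2 : AnalyticOnNhd ℂ g2 U := hAg.deriv
  have hdΨ : ∀ x ∈ K, HasDerivAt Ψ (g x) x := fun x hx =>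
    ((hA x (hKU hx)).differentiableAt).hasDerivAt
  have hdg : ∀ x ∈ K, HasDerivAt g (g2 x) x := fun x hx =>
    ((hAg x (hKU hx)).differentiableAt).hasDerivAt
  obtain ⟨m₀, hm₀⟩ := hKc.exists_bound_of_continuousOn (hA.continuousOn.mono hKU)
  obtain ⟨m₁, hm₁⟩ := hKc.exists_bound_of_continuousOn (hAg.continuousOn.mono hKU)
  obtain ⟨m₂, hm₂⟩ := hKc.exists_bound_of_continuousOn (hAg2.continuousOn.mono hKU)
  set M₀ : ℝ := max m₀ 0 with hM₀def
  set M₁ : ℝ := max m₁ 0 with hM₁def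
  set M₂ : ℝ := max m₂ 0 with hM₂def
  have hM₀ : ∀ x ∈ K, ‖Ψ x‖ ≤ M₀ := fun x hx => (hm₀ x hx).trans (le_max_left _ _)
  have hM₁ : ∀ x ∈ K, ‖g x‖ ≤ M₁ := fun x hx => (hm₁ x hx).trans (le_max_left _ _)
  have hM₂ : ∀ x ∈ K, ‖g2 x‖ ≤ M₂ := fun x hx => (hm₂ x hx).trans (le_max_left _ _)
  have hM₀0 : 0 ≤ M₀ := le_max_right _ _
  have hM₁0 : 0 ≤ M₁ := le_max_right _ _
  have hM₂0 : 0 ≤ M₂ := le_max_right _ _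
  -- choose N₀
  have hρsq : 0 < 1 - ρ₁ ^ 2 := by nlinarith only [hρ₁pos, hρ₁lt1]
  obtain ⟨N₀, hN₀⟩ := exists_nat_ge (Real.pi ^ 2 / (1 - ρ₁ ^ 2) + 1)
  set B : ℝ := (N₀ : ℝ) + 3 with hBdef
  have hB0 : 0 < B := by positivity
  refine ⟨M₂, 4 * Real.pi * M₂ + B * (M₁ + B * M₀), ?_⟩
  intro N hN3 R hR1 hRR₀ k
  dsimp only
  -- basic facts about N, θ, ω
  have hNpos : (0:ℝ) < N := by exact_mod_cast (by omega : 0 < N)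
  have hN3' : (3:ℝ) ≤ N := by exact_mod_cast hN3
  set θ : ℝ := 2 * Real.pi / N with hθdef
  set ω : ℂ := Complex.exp (2 * Real.pi * Complex.I / N) with hωdef
  have hθpos : 0 < θ := by rw [hθdef]; positivity
  have hθle : θ ≤ 2 * Real.pi / 3 := by
    rw [hθdef]
    apply div_le_div_of_nonneg_left (by positivity) (by norm_num) hN3'
  have hθltπ : θ < Real.pi := lt_of_le_of_lt hθle (by linarith only [Real.pi_pos])
  have hsinpos : 0 < Real.sin θ := Real.sin_pos_of_pos_of_lt_pi hθpos hθltπ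
  have hωθ : ω = Complex.exp ((θ : ℂ) * Complex.I) := by
    rw [hωdef, hθdef]
    congr 1
    push_cast
    ring
  have hωexp : ω = (Real.cos θ : ℂ) + (Real.sin θ : ℂ) * Complex.I := by
    rw [hωθ, Complex.exp_mul_I, ← Complex.ofReal_cos, ← Complex.ofReal_sin]
  have hpyth : ((Real.sin θ : ℂ)) ^ 2 + ((Real.cos θ : ℂ)) ^ 2 = 1 := by
    exact_mod_cast Real.sin_sq_add_cos_sq θ
  have hωinv : ω⁻¹ = (Real.cos θ : ℂ) - (Real.sin θ : ℂ) * Complex.I := by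
    refine inv_eq_of_mul_eq_one_right ?_
    rw [hωexp]
    linear_combination hpyth - ((Real.sin θ : ℂ)) ^ 2 * Complex.I_sq
  have hωne : ω ≠ 0 := Complex.exp_ne_zero _
  have habsω : ‖ω‖ = 1 := by
    rw [hωθ]
    simp [Complex.norm_exp]
  have habsωk : ∀ j : ℤ, ‖ω ^ j‖ = 1 := fun j => by
    rw [norm_zpow, habsω, one_zpow]
  have hsub : ω - ω⁻¹ = 2 * (Real.sin θ : ℂ) * Complex.I := by
    linear_combination hωexp - hωinv
  -- membership of circle points
  have hcircK : ∀ j : ℤ, ω ^ j ∈ K := fun j =>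
    ⟨by rw [habsωk]; exact hρ₁lt1.le, by rw [habsωk]; exact h1ρ₂⟩
  -- radial segment
  have hseg0 : segment ℝ (ω ^ k) ((R : ℂ) * ω ^ k) ⊆ K := by
    rintro x ⟨u, v, hu, hv, huv, rfl⟩
    have hx : u • (ω ^ k) + v • ((R : ℂ) * ω ^ k) = ((u + v * R : ℝ) : ℂ) * ω ^ k := by
      simp only [Complex.real_smul]
      push_cast
      ring
    rw [hx]
    have habs : ‖((u + v * R : ℝ) : ℂ) * ω ^ k‖ = u + v * R := by
      rw [norm_mul, habsωk, mul_one, Complex.norm_real, Real.norm_eq_abs, _root_.abs_of_nonneg (by nlinarith only [hu, hv, huv, hR1])]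
    exact ⟨by rw [habs]; nlinarith only [hu, hv, huv, hR1, hρ₁lt1],
      by rw [habs]; nlinarith only [hu, hv, huv, hR1, hRR₀, hρ₂gtR₀]⟩
  -- chord segments (need cosine condition)
  have hchordK : ∀ w : ℂ, w = (Real.cos θ : ℂ) + (Real.sin θ : ℂ) * Complex.I ∨
      w = (Real.cos θ : ℂ) - (Real.sin θ : ℂ) * Complex.I →
      ρ₁ ^ 2 ≤ (1 + Real.cos θ) / 2 →
      segment ℝ (ω ^ k) (ω ^ k * w) ⊆ K := by
    intro w hw hcos
    rintro x ⟨u, v, hu, hv, huv, rfl⟩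
    have hx : u • (ω ^ k) + v • (ω ^ k * w) = ω ^ k * ((u : ℂ) + (v : ℂ) * w) := by
      simp only [Complex.real_smul]
      ring
    rw [hx]
    have hsq : ‖ω ^ k * ((u : ℂ) + (v : ℂ) * w)‖ ^ 2
        = u ^ 2 + v ^ 2 + 2 * u * v * Real.cos θ := by
      rw [norm_mul, habsωk, one_mul, Complex.sq_norm, Complex.normSq_apply]
      rcases hw with hw | hw <;>
      · rw [hw]
        simp only [Complex.add_re, Complex.add_im, Complex.sub_re, Complex.sub_im,
          Complex.mul_re, Complex.mul_im, Complex.ofReal_re, Complex.ofReal_im,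
          Complex.I_re, Complex.I_im]
        linear_combination v ^ 2 * Real.sin_sq_add_cos_sq θ
    have hcos1 : Real.cos θ ≤ 1 := Real.cos_le_one θ
    have h1c : (0:ℝ) ≤ 1 - Real.cos θ := by linarith only [hcos1]
    have husq : (u + v) ^ 2 = 1 := by rw [huv]; norm_num
    have h4uv : (0:ℝ) ≤ 1 - 4 * (u * v) := by linarith only [sq_nonneg (u - v), husq]
    have hub : ‖ω ^ k * ((u : ℂ) + (v : ℂ) * w)‖ ^ 2 ≤ 1 := by
      rw [hsq]
      linarith only [husq, mul_nonneg (mul_nonneg hu hv) h1c]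
    have hlb : ρ₁ ^ 2 ≤ ‖ω ^ k * ((u : ℂ) + (v : ℂ) * w)‖ ^ 2 := by
      rw [hsq]
      linarith only [husq, hcos, mul_nonneg h1c h4uv]
    have h1 : ‖ω ^ k * ((u : ℂ) + (v : ℂ) * w)‖ ≤ 1 := by
      nlinarith only [hub, norm_nonneg (ω ^ k * ((u : ℂ) + (v : ℂ) * w))]
    exact ⟨le_of_pow_le_pow_left₀ two_ne_zero (norm_nonneg _) hlb, h1.trans h1ρ₂⟩
  -- zpow relations and r facts
  have hωk1 : ω ^ (k + 1) = ω ^ k * ω := zpow_add_one₀ hωne k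
  have hωkm : ω ^ (k - 1) = ω ^ k * ω⁻¹ := zpow_sub_one₀ hωne k
  set r : ℝ := (R - 1) / Real.sin θ with hrdef
  have hR10 : (0:ℝ) ≤ R - 1 := by linarith only [hR1]
  have hr0 : 0 ≤ r := div_nonneg hR10 hsinpos.le
  have hrsin : r * Real.sin θ = R - 1 := div_mul_cancel₀ _ (ne_of_gt hsinpos)
  have hcn : ‖Complex.I * (r:ℂ) / 2‖ = r / 2 := by
    rw [norm_div, norm_mul, Complex.norm_I, one_mul, Complex.norm_real, Real.norm_eq_abs,
      Complex.norm_two, _root_.abs_of_nonneg hr0]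
  set d : ℂ := g (ω ^ k) with hddef
  have hnorm0 : ‖(R:ℂ) * ω ^ k - ω ^ k‖ = R - 1 := by
    rw [show (R:ℂ) * ω ^ k - ω ^ k = ((R - 1 : ℝ) : ℂ) * ω ^ k by push_cast; ring]
    rw [norm_mul, Complex.norm_real, Real.norm_eq_abs, habsωk, mul_one,
      _root_.abs_of_nonneg hR10]
  rw [hωk1, hωkm]
  clear_value U K g g2 ρ₁ ρ₂ M₀ M₁ M₂ B θ ω r d
  by_cases hbig : Real.pi ^ 2 / (1 - ρ₁ ^ 2) + 1 ≤ (N:ℝ)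
  · -- large N : genuine Taylor estimate
    have hθN : θ * N = 2 * Real.pi := by
      rw [hθdef]; field_simp
    have hcosθ : 1 - θ ^ 2 / 2 ≤ Real.cos θ := Real.one_sub_sq_div_two_le_cos
    have haN : Real.pi ^ 2 + (1 - ρ₁ ^ 2) ≤ (1 - ρ₁ ^ 2) * N := by
      have ht : (1 - ρ₁ ^ 2) * (Real.pi ^ 2 / (1 - ρ₁ ^ 2)) = Real.pi ^ 2 :=
        mul_div_cancel₀ _ (ne_of_gt hρsq)
      linarith only [mul_le_mul_of_nonneg_left hbig hρsq.le, ht]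
    have haN2 : Real.pi ^ 2 ≤ (1 - ρ₁ ^ 2) * (N:ℝ) ^ 2 := by
      have hNN : (N:ℝ) ≤ (N:ℝ) ^ 2 := by nlinarith only [hN3']
      have h2 := mul_le_mul_of_nonneg_left hNN hρsq.le
      linarith only [haN, hρsq, h2]
    have hθsq : θ ^ 2 * (N:ℝ) ^ 2 = 4 * Real.pi ^ 2 := by
      linear_combination (θ * (N:ℝ) + 2 * Real.pi) * hθN
    have hθ4 : θ ^ 2 ≤ 4 * (1 - ρ₁ ^ 2) := by
      nlinarith only [hθsq, haN2, mul_pos hNpos hNpos]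
    have hcos : ρ₁ ^ 2 ≤ (1 + Real.cos θ) / 2 := by linarith only [hcosθ, hθ4]
    have hsegp : segment ℝ (ω ^ k) (ω ^ k * ω) ⊆ K := hchordK ω (Or.inl hωexp) hcos
    have hsegm : segment ℝ (ω ^ k) (ω ^ k * ω⁻¹) ⊆ K := hchordK ω⁻¹ (Or.inr hωinv) hcos
    have hT0 : ‖Ψ ((R:ℂ) * ω ^ k) - Ψ (ω ^ k) - d * ((R:ℂ) * ω ^ k - ω ^ k)‖
        ≤ M₂ * (R - 1) ^ 2 := by
      have h := taylor_two (fun x hx => hdΨ x (hseg0 hx)) (fun x hx => hdg x (hseg0 hx))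
        (fun x hx => hM₂ x (hseg0 hx))
      rwa [hnorm0, ← hddef] at h
    have hchordnorm : ∀ w : ℂ, w = (Real.cos θ : ℂ) + (Real.sin θ : ℂ) * Complex.I ∨
        w = (Real.cos θ : ℂ) - (Real.sin θ : ℂ) * Complex.I →
        ‖ω ^ k * w - ω ^ k‖ ^ 2 = 2 - 2 * Real.cos θ := by
      intro w hw
      rw [show ω ^ k * w - ω ^ k = ω ^ k * (w - 1) by ring, norm_mul,
        habsωk, one_mul, Complex.sq_norm, Complex.normSq_apply]
      rcases hw with hw | hw <;>
      · rw [hw]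
        simp only [Complex.add_re, Complex.add_im, Complex.sub_re, Complex.sub_im,
          Complex.mul_re, Complex.mul_im, Complex.ofReal_re, Complex.ofReal_im,
          Complex.I_re, Complex.I_im, Complex.one_re, Complex.one_im]
        linear_combination Real.sin_sq_add_cos_sq θ
    have hTp : ‖Ψ (ω ^ k * ω) - Ψ (ω ^ k) - d * (ω ^ k * ω - ω ^ k)‖
        ≤ M₂ * (2 - 2 * Real.cos θ) := by
      have h := taylor_two (fun x hx => hdΨ x (hsegp hx)) (fun x hx => hdg x (hsegp hx))
        (fun x hx => hM₂ x (hsegp hx))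
      rwa [hchordnorm ω (Or.inl hωexp), ← hddef] at h
    have hTm : ‖Ψ (ω ^ k * ω⁻¹) - Ψ (ω ^ k) - d * (ω ^ k * ω⁻¹ - ω ^ k)‖
        ≤ M₂ * (2 - 2 * Real.cos θ) := by
      have h := taylor_two (fun x hx => hdΨ x (hsegm hx)) (fun x hx => hdg x (hsegm hx))
        (fun x hx => hM₂ x (hsegm hx))
      rwa [hchordnorm ω⁻¹ (Or.inr hωinv), ← hddef] at h
    have hcancel : Complex.I * (r:ℂ) / 2 * (ω - ω⁻¹) = -(((R:ℂ) - 1)) := by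
      rw [hsub, show Complex.I * (r:ℂ) / 2 * (2 * (Real.sin θ : ℂ) * Complex.I)
        = ((r * Real.sin θ : ℝ) : ℂ) * (Complex.I * Complex.I) by push_cast; ring,
        Complex.I_mul_I, hrsin]
      push_cast; ring
    have hid : Ψ ((R:ℂ) * ω ^ k)
          - (Ψ (ω ^ k) - Complex.I * (r:ℂ) / 2 * (Ψ (ω ^ k * ω) - Ψ (ω ^ k * ω⁻¹)))
        = (Ψ ((R:ℂ) * ω ^ k) - Ψ (ω ^ k) - d * ((R:ℂ) * ω ^ k - ω ^ k))
          + Complex.I * (r:ℂ) / 2 * ((Ψ (ω ^ k * ω) - Ψ (ω ^ k) - d * (ω ^ k * ω - ω ^ k))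
            - (Ψ (ω ^ k * ω⁻¹) - Ψ (ω ^ k) - d * (ω ^ k * ω⁻¹ - ω ^ k))) := by
      linear_combination d * ω ^ k * hcancel
    rw [hid]
    have hbound : ‖(Ψ ((R:ℂ) * ω ^ k) - Ψ (ω ^ k) - d * ((R:ℂ) * ω ^ k - ω ^ k))
          + Complex.I * (r:ℂ) / 2 * ((Ψ (ω ^ k * ω) - Ψ (ω ^ k) - d * (ω ^ k * ω - ω ^ k))
            - (Ψ (ω ^ k * ω⁻¹) - Ψ (ω ^ k) - d * (ω ^ k * ω⁻¹ - ω ^ k)))‖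
        ≤ M₂ * (R - 1) ^ 2 + (r / 2) * (M₂ * (2 - 2 * Real.cos θ) + M₂ * (2 - 2 * Real.cos θ)) := by
      refine (norm_add_le _ _).trans ?_
      have h2 : ‖Complex.I * (r:ℂ) / 2 * ((Ψ (ω ^ k * ω) - Ψ (ω ^ k) - d * (ω ^ k * ω - ω ^ k))
            - (Ψ (ω ^ k * ω⁻¹) - Ψ (ω ^ k) - d * (ω ^ k * ω⁻¹ - ω ^ k)))‖
          ≤ (r / 2) * (M₂ * (2 - 2 * Real.cos θ) + M₂ * (2 - 2 * Real.cos θ)) := by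
        rw [norm_mul, hcn]
        refine mul_le_mul_of_nonneg_left ?_ (by linarith only [hr0])
        exact (norm_sub_le _ _).trans (add_le_add hTp hTm)
      exact add_le_add hT0 h2
    refine hbound.trans ?_
    -- trig estimate : 2 - 2 cos θ ≤ 2 θ sin θ
    have hs2 : Real.sin (θ / 2) ≤ θ / 2 := Real.sin_le (by linarith only [hθpos])
    have hs2' : 0 ≤ Real.sin (θ / 2) :=
      Real.sin_nonneg_of_nonneg_of_le_pi (by linarith only [hθpos]) (by linarith only [hθpos, hθltπ])
    have hc2 : (1:ℝ) / 2 ≤ Real.cos (θ / 2) := by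
      have h := Real.cos_le_cos_of_nonneg_of_le_pi
        (by linarith only [hθpos] : (0:ℝ) ≤ θ / 2) (by linarith only [Real.pi_pos] : Real.pi / 3 ≤ Real.pi)
        (by linarith only [hθle] : θ / 2 ≤ Real.pi / 3)
      rwa [Real.cos_pi_div_three] at h
    have hcosθ2 : Real.cos θ = 1 - 2 * Real.sin (θ / 2) ^ 2 := by
      have h := Real.cos_two_mul' (θ / 2)
      rw [show 2 * (θ / 2) = θ by ring] at h
      linear_combination h + Real.sin_sq_add_cos_sq (θ / 2)
    have hsinθ2 : Real.sin θ = 2 * Real.sin (θ / 2) * Real.cos (θ / 2) := by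
      have h := Real.sin_two_mul (θ / 2)
      rw [show 2 * (θ / 2) = θ by ring] at h
      exact h
    have h2c : 2 - 2 * Real.cos θ ≤ 2 * θ * Real.sin θ := by
      rw [hcosθ2, hsinθ2]
      nlinarith only [mul_le_mul_of_nonneg_right hs2 hs2',
        mul_le_mul_of_nonneg_right hc2 (mul_nonneg hθpos.le hs2')]
    have hrθ : r * (2 - 2 * Real.cos θ) ≤ (R - 1) * (2 * θ) := by
      rw [hrdef, div_mul_eq_mul_div, div_le_iff₀ hsinpos]
      calc (R - 1) * (2 - 2 * Real.cos θ) ≤ (R - 1) * (2 * θ * Real.sin θ) :=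
            mul_le_mul_of_nonneg_left h2c hR10
        _ = (R - 1) * (2 * θ) * Real.sin θ := by ring
    have h2θ : (R - 1) * (2 * θ) = 4 * Real.pi * (R - 1) / N := by
      rw [hθdef]; field_simp; ring
    have hfinal : (r / 2) * (M₂ * (2 - 2 * Real.cos θ) + M₂ * (2 - 2 * Real.cos θ))
        ≤ 4 * Real.pi * M₂ * (R - 1) / N := by
      have h1 : (r / 2) * (M₂ * (2 - 2 * Real.cos θ) + M₂ * (2 - 2 * Real.cos θ))
          = M₂ * (r * (2 - 2 * Real.cos θ)) := by ring
      rw [h1]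
      calc M₂ * (r * (2 - 2 * Real.cos θ)) ≤ M₂ * ((R - 1) * (2 * θ)) :=
            mul_le_mul_of_nonneg_left hrθ hM₂0
        _ = 4 * Real.pi * M₂ * (R - 1) / N := by rw [h2θ]; ring
    have hextra : 0 ≤ B * (M₁ + B * M₀) * (R - 1) / N := by
      apply div_nonneg _ hNpos.le
      apply mul_nonneg _ hR10
      apply mul_nonneg hB0.le
      have hBM : 0 ≤ B * M₀ := mul_nonneg hB0.le hM₀0
      linarith only [hM₁0, hBM]
    have hsplit : M₂ * (R - 1) ^ 2 + (4 * Real.pi * M₂ + B * (M₁ + B * M₀)) * (R - 1) / N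
        = M₂ * (R - 1) ^ 2 + 4 * Real.pi * M₂ * (R - 1) / N + B * (M₁ + B * M₀) * (R - 1) / N := by
      ring
    rw [hsplit]
    linarith only [hfinal, hextra]
  · -- small N : crude estimate
    push_neg at hbig
    have hNB : (N:ℝ) ≤ B := by
      rw [hBdef]
      linarith only [hN₀, hbig]
    have hsinN : 1 / (N:ℝ) ≤ Real.sin θ := by
      rcases eq_or_lt_of_le hN3 with h3 | h4
      · have hN3eq : (N:ℝ) = 3 := by exact_mod_cast h3.symm
        have hθeq : θ = Real.pi - Real.pi / 3 := by
          rw [hθdef, hN3eq]; ring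
        rw [hθeq, Real.sin_pi_sub, Real.sin_pi_div_three, hN3eq]
        have h1 : (1:ℝ) ≤ Real.sqrt 3 := by
          rw [show (1:ℝ) = Real.sqrt 1 by simp]
          exact Real.sqrt_le_sqrt (by norm_num)
        linarith
      · have h4' : (4:ℝ) ≤ N := by exact_mod_cast h4
        have hθ2 : θ ≤ Real.pi / 2 := by
          rw [hθdef, div_le_div_iff₀ hNpos (by norm_num : (0:ℝ) < 2)]
          have h4π := mul_le_mul_of_nonneg_left h4' Real.pi_pos.le
          linarith only [h4π]
        have hms := Real.mul_le_sin hθpos.le hθ2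
        have heq : 2 / Real.pi * θ = 4 / (N:ℝ) := by
          rw [hθdef]; field_simp [Real.pi_ne_zero]; ring
        rw [heq] at hms
        calc 1 / (N:ℝ) ≤ 4 / N := by gcongr <;> norm_num
          _ ≤ Real.sin θ := hms
    have hrN : r ≤ (N:ℝ) * (R - 1) := by
      rw [hrdef, div_le_iff₀ hsinpos]
      calc R - 1 = (N:ℝ) * (R - 1) * (1 / N) := by field_simp
        _ ≤ (N:ℝ) * (R - 1) * Real.sin θ := by
            apply mul_le_mul_of_nonneg_left hsinN
            exact mul_nonneg hNpos.le hR10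
    have hstep1 : ‖Ψ ((R:ℂ) * ω ^ k) - Ψ (ω ^ k)‖ ≤ M₁ * (R - 1) := by
      have h := mvt_first (convex_segment _ _) (fun x hx => hdΨ x (hseg0 hx))
        (fun x hx => hM₁ x (hseg0 hx)) (left_mem_segment ℝ _ _) (right_mem_segment ℝ _ _)
      rwa [hnorm0] at h
    have hmemp : ω ^ k * ω ∈ K := by rw [← hωk1]; exact hcircK (k + 1)
    have hmemm : ω ^ k * ω⁻¹ ∈ K := by rw [← hωkm]; exact hcircK (k - 1)
    have hid2 : Ψ ((R:ℂ) * ω ^ k)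
          - (Ψ (ω ^ k) - Complex.I * (r:ℂ) / 2 * (Ψ (ω ^ k * ω) - Ψ (ω ^ k * ω⁻¹)))
        = (Ψ ((R:ℂ) * ω ^ k) - Ψ (ω ^ k))
          + Complex.I * (r:ℂ) / 2 * (Ψ (ω ^ k * ω) - Ψ (ω ^ k * ω⁻¹)) := by ring
    rw [hid2]
    have hbound : ‖(Ψ ((R:ℂ) * ω ^ k) - Ψ (ω ^ k))
          + Complex.I * (r:ℂ) / 2 * (Ψ (ω ^ k * ω) - Ψ (ω ^ k * ω⁻¹))‖
        ≤ M₁ * (R - 1) + (r / 2) * (M₀ + M₀) := by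
      refine (norm_add_le _ _).trans (add_le_add hstep1 ?_)
      rw [norm_mul, hcn]
      refine mul_le_mul_of_nonneg_left ?_ (by linarith only [hr0])
      exact (norm_sub_le _ _).trans (add_le_add (hM₀ _ hmemp) (hM₀ _ hmemm))
    refine hbound.trans ?_
    have hkey : M₁ * (R - 1) + (r / 2) * (M₀ + M₀) ≤ (M₁ + B * M₀) * (R - 1) := by
      have h1 : (r / 2) * (M₀ + M₀) = M₀ * r := by ring
      rw [h1]
      have h2 : M₀ * r ≤ M₀ * ((N:ℝ) * (R - 1)) := mul_le_mul_of_nonneg_left hrN hM₀0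
      linarith only [h2, mul_le_mul_of_nonneg_right (mul_le_mul_of_nonneg_left hNB hM₀0) hR10]
    refine hkey.trans ?_
    have hmain : (M₁ + B * M₀) * (R - 1) ≤ B * (M₁ + B * M₀) * (R - 1) / N := by
      rw [le_div_iff₀ hNpos]
      have hc0 : 0 ≤ (M₁ + B * M₀) * (R - 1) := by
        apply mul_nonneg _ hR10
        have hBM : 0 ≤ B * M₀ := mul_nonneg hB0.le hM₀0
        linarith only [hM₁0, hBM]
      linarith only [mul_le_mul_of_nonneg_left hNB hc0]
    have hrest : 0 ≤ M₂ * (R - 1) ^ 2 + 4 * Real.pi * M₂ * (R - 1) / N := by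
      have : 0 ≤ 4 * Real.pi * M₂ * (R - 1) / N := by
        apply div_nonneg _ hNpos.le
        apply mul_nonneg _ hR10
        exact mul_nonneg (mul_nonneg (by norm_num) Real.pi_pos.le) hM₂0
      linarith only [mul_nonneg hM₂0 (sq_nonneg (R - 1)), this]
    have hsplit : M₂ * (R - 1) ^ 2 + (4 * Real.pi * M₂ + B * (M₁ + B * M₀)) * (R - 1) / N
        = (M₂ * (R - 1) ^ 2 + 4 * Real.pi * M₂ * (R - 1) / N) + B * (M₁ + B * M₀) * (R - 1) / N := by
      ring
    rw [hsplit]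
    linarith only [hmain, hrest]
end
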